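/- arXiv:0809.4775 — 2 statements merged into one kernel-verified Lean document; each statement's English description precedes it below -/
import Mathlib

section
/- Let k ∈ ℕ and let {I_j}_{j=1,...,2^k} be intervals covering ℝ with pairwise disjoint interiors. For an integer n₀, let h(n₀)+1 be the number of intervals I_j intersecting (n₀, n₀+1), and let Z̃ be the set of integers n₀ such that (n₀,n₀+1) contains no integer endpoint structure as in the construction (i.e., (n₀,n₀+1) meets none of the maximal integer-endpoint subintervals of the I_j). Then 0 ≤ h(n₀) ≤ 2^k for each n₀ and Σ_{n₀ ∈ Z̃} h(n₀) ≤ 2^{k+1}. -/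
open Set

noncomputable section
open scoped Classical

/-- The maximal open subinterval of `I` with integer endpoints: `(z_j, z_{j+1})` where
`z_j` is the least and `z_{j+1}` the greatest element of `ℤ ∪ {±∞}` contained in `I`. -/
def intTilde (I : Set ℝ) : Set ℝ :=
  ⋃ (a : ℤ) (_ : (a : ℝ) ∈ I) (b : ℤ) (_ : (b : ℝ) ∈ I), Set.Ioo (a : ℝ) (b : ℝ)

/-- `h(n₀)`: one less than the number of intervals of the family meeting `(n₀, n₀+1)`. -/
def hcount (k : ℕ) (I : Fin (2 ^ k) → Set ℝ) (n₀ : ℤ) : ℕ :=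
  (Finset.univ.filter fun j => (I j ∩ Set.Ioo (n₀ : ℝ) ((n₀ : ℝ) + 1)).Nonempty).card - 1

/-
An order-connected set meets at most two of the unit intervals `(n, n+1)` that avoid its
integer-endpoint part: if it met `(a, a+1)`, `(b, b+1)`, `(c, c+1)` with `a < b < c`, it would
contain the integers `a + 1` and `c`, hence `(b, b+1) ⊆ (a+1, c) ⊆ intTilde s`.
-/

theorem Ioo_subset_intTilde_of_mem {s : Set ℝ} {a b : ℤ} (ha : (a : ℝ) ∈ s) (hb : (b : ℝ) ∈ s) :
    Ioo (a : ℝ) b ⊆ intTilde s := fun x hx => by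
  simp only [intTilde, mem_iUnion]
  exact ⟨a, ha, b, hb, hx⟩

theorem Set.OrdConnected.Ioo_subset_intTilde {s : Set ℝ} (hs : s.OrdConnected) {a c : ℤ}
    (hac : a < c) (ha : (s ∩ Ioo (a : ℝ) (a + 1)).Nonempty)
    (hc : (s ∩ Ioo (c : ℝ) (c + 1)).Nonempty) :
    Ioo ((a : ℝ) + 1) c ⊆ intTilde s := by
  obtain ⟨p, hps, hpa⟩ := ha
  obtain ⟨q, hqs, hqc⟩ := hc
  have hac' : (a : ℝ) + 1 ≤ c := by exact_mod_cast hac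
  have hmem : Icc ((a : ℝ) + 1) c ⊆ s :=
    (Icc_subset_Icc hpa.2.le hqc.1.le).trans (hs.out hps hqs)
  have h₁ : ((a + 1 : ℤ) : ℝ) ∈ s := hmem ⟨by push_cast; rfl, by push_cast; exact hac'⟩
  have h₂ : ((c : ℤ) : ℝ) ∈ s := hmem ⟨hac', le_rfl⟩
  simpa using Ioo_subset_intTilde_of_mem h₁ h₂

theorem Set.OrdConnected.card_filter_meets_le_two {s : Set ℝ} (hs : s.OrdConnected)
    (S : Finset ℤ) (hS : ∀ n ∈ S, Disjoint (Ioo (n : ℝ) (n + 1)) (intTilde s)) :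
    (S.filter fun n : ℤ => (s ∩ Ioo (n : ℝ) (n + 1)).Nonempty).card ≤ 2 := by
  set T := S.filter fun n : ℤ => (s ∩ Ioo (n : ℝ) (n + 1)).Nonempty
  rcases T.eq_empty_or_nonempty with hT | hT
  · simp [hT]
  have hsub : T ⊆ {T.min' hT, T.max' hT} := by
    intro b hb
    have hmin := T.min'_le b hb
    have hmax := T.le_max' b hb
    by_contra hne
    simp only [Finset.mem_insert, Finset.mem_singleton, not_or] at hne
    have hbS : b ∈ S := (Finset.mem_filter.1 hb).1
    have hmeets := fun n (hn : n ∈ T) => (Finset.mem_filter.1 hn).2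
    have hlt₁ : T.min' hT < b := lt_of_le_of_ne hmin (Ne.symm hne.1)
    have hlt₂ : b < T.max' hT := lt_of_le_of_ne hmax hne.2
    have hIoo := hs.Ioo_subset_intTilde (hlt₁.trans hlt₂) (hmeets _ (T.min'_mem hT))
      (hmeets _ (T.max'_mem hT))
    have hb₁ : ((T.min' hT : ℤ) : ℝ) + 1 ≤ b := by exact_mod_cast hlt₁
    have hb₂ : (b : ℝ) + 1 ≤ T.max' hT := by exact_mod_cast hlt₂
    have hmid : (b : ℝ) + 1 / 2 ∈ Ioo (b : ℝ) (b + 1) := ⟨by linarith, by linarith⟩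
    exact (hS b hbS).ne_of_mem hmid (hIoo ⟨by linarith, by linarith⟩) rfl
  exact (Finset.card_le_card hsub).trans Finset.card_le_two

theorem sum_card_meets_le {ι : Type*} [Fintype ι] (I : ι → Set ℝ) (hI : ∀ j, (I j).OrdConnected)
    (S : Finset ℤ) (hS : ∀ n ∈ S, Disjoint (Ioo (n : ℝ) (n + 1)) (⋃ j, intTilde (I j))) :
    ∑ n ∈ S, (Finset.univ.filter fun j => (I j ∩ Ioo (n : ℝ) (n + 1)).Nonempty).card
      ≤ 2 * Fintype.card ι := by
  calc ∑ n ∈ S, (Finset.univ.filter fun j => (I j ∩ Ioo (n : ℝ) (n + 1)).Nonempty).card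
      = ∑ j, (S.filter fun n : ℤ => (I j ∩ Ioo (n : ℝ) (n + 1)).Nonempty).card := by
        simp only [Finset.card_filter]
        exact Finset.sum_comm
    _ ≤ ∑ _j : ι, 2 := Finset.sum_le_sum fun j _ =>
        (hI j).card_filter_meets_le_two S fun n hn =>
          (hS n hn).mono_right (subset_iUnion (fun j => intTilde (I j)) j)
    _ = 2 * Fintype.card ι := by simp [mul_comm]

theorem stmt3_general (k : ℕ) (I : Fin (2 ^ k) → Set ℝ)
    (hI : ∀ j, (I j).OrdConnected) :
    (∀ n₀ : ℤ, hcount k I n₀ ≤ 2 ^ k) ∧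
      ∀ S : Finset ℤ,
        (∀ n₀ ∈ S, Disjoint (Set.Ioo (n₀ : ℝ) ((n₀ : ℝ) + 1)) (⋃ j, intTilde (I j))) →
        ∑ n₀ ∈ S, hcount k I n₀ ≤ 2 ^ (k + 1) := by
  refine ⟨fun n₀ => ?_, fun S hS => ?_⟩
  · exact (Nat.sub_le _ _).trans ((Finset.card_filter_le _ _).trans (by simp))
  · calc ∑ n₀ ∈ S, hcount k I n₀
        ≤ ∑ n₀ ∈ S, (Finset.univ.filter fun j =>
            (I j ∩ Ioo (n₀ : ℝ) ((n₀ : ℝ) + 1)).Nonempty).card :=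
          Finset.sum_le_sum fun _ _ => Nat.sub_le _ _
      _ ≤ 2 * Fintype.card (Fin (2 ^ k)) := sum_card_meets_le I hI S hS
      _ = 2 ^ (k + 1) := by simp [pow_succ, mul_comm]

theorem stmt3 (k : ℕ) (I : Fin (2 ^ k) → Set ℝ)
    (hI : ∀ j, (I j).OrdConnected)
    (hcov : (⋃ j, I j) = Set.univ)
    (hdisj : Pairwise fun j j' => Disjoint (interior (I j)) (interior (I j'))) :
    (∀ n₀ : ℤ, hcount k I n₀ ≤ 2 ^ k) ∧
      ∀ S : Finset ℤ,
        (∀ n₀ ∈ S, Disjoint (Set.Ioo (n₀ : ℝ) ((n₀ : ℝ) + 1)) (⋃ j, intTilde (I j))) →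
        ∑ n₀ ∈ S, hcount k I n₀ ≤ 2 ^ (k + 1) :=
  stmt3_general k I hI
end
end

section
/- Let P : ℝ → ℝ be continuous, let a < b be reals, and for j = 1,2 let E_j ∈ ℝ with E₁ ≠ E₂, and let u_j ∈ C²([a,b]) be nonzero solutions of −u_j'' + P·u_j = E_j·u_j on [a,b] with u_j(a) = u_j(b) = 0 and u_j(x) ≠ 0 for all x ∈ (a,b). Then it is impossible that |u₁(x)| = |u₂(x)| for all x ∈ [a,b]. -/
open Set Filter Topology

theorem exists_abs_eq_one_eventuallyEq_mul_of_abs_eq {X : Type*} [TopologicalSpace X]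
    {f g : X → ℝ} {x₀ : X} (hf : ContinuousAt f x₀) (hg : ContinuousAt g x₀) (hg₀ : g x₀ ≠ 0)
    (h : ∀ᶠ x in 𝓝 x₀, |f x| = |g x|) :
    ∃ c : ℝ, |c| = 1 ∧ f =ᶠ[𝓝 x₀] fun x => c * g x := by
  set c := f x₀ / g x₀
  have hfc : f x₀ = c * g x₀ := (div_mul_cancel₀ _ hg₀).symm
  have hc : |c| = 1 := by
    rw [abs_div, h.self_of_nhds, div_self (abs_ne_zero.mpr hg₀)]
  -- `(f - c g)(f + c g) = f² - g² = 0`, and `f + c g` is `2 f x₀ ≠ 0` at `x₀`.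
  have hsum : ∀ᶠ x in 𝓝 x₀, f x + c * g x ≠ 0 := by
    refine (hf.add (hg.const_mul c)).eventually_ne ?_
    have hc₀ : c ≠ 0 := by rintro h₀; simp [h₀] at hc
    show f x₀ + c * g x₀ ≠ 0
    rw [hfc, ← two_mul]
    exact mul_ne_zero two_ne_zero (mul_ne_zero hc₀ hg₀)
  refine ⟨c, hc, ?_⟩
  filter_upwards [h, hsum] with x hx hx'
  have hsq : (f x - c * g x) * (f x + c * g x) = 0 := by
    have : c ^ 2 = 1 := by rw [← sq_abs, hc, one_pow]
    have hfg : f x ^ 2 = g x ^ 2 := sq_eq_sq_iff_abs_eq_abs _ _ |>.mpr hx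
    linear_combination hfg - g x ^ 2 * this
  exact sub_eq_zero.mp ((mul_eq_zero.mp hsq).resolve_right hx')

theorem eq_of_deriv_deriv_eq_mul_of_eventuallyEq_const_mul {u₁ u₂ : ℝ → ℝ} {x₀ c V₁ V₂ : ℝ}
    (hc : c ≠ 0) (hu₂ : u₂ x₀ ≠ 0) (hu : u₁ =ᶠ[𝓝 x₀] fun x => c * u₂ x)
    (h₁ : deriv (deriv u₁) x₀ = V₁ * u₁ x₀) (h₂ : deriv (deriv u₂) x₀ = V₂ * u₂ x₀) :
    V₁ = V₂ := by
  have hdd : deriv (deriv u₁) x₀ = c * deriv (deriv u₂) x₀ := by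
    rw [hu.deriv.deriv.eq_of_nhds, deriv_const_mul_field', deriv_const_mul_field]
  rw [h₁, h₂, hu.self_of_nhds] at hdd
  have : (V₁ - V₂) * (c * u₂ x₀) = 0 := by linear_combination hdd
  exact sub_eq_zero.mp ((mul_eq_zero.mp this).resolve_right (mul_ne_zero hc hu₂))

theorem stmt8_general (P : ℝ → ℝ) (a b : ℝ) (hab : a < b)
    (E₁ E₂ : ℝ) (hE : E₁ ≠ E₂) (u₁ u₂ : ℝ → ℝ)
    (hu₁ : ContDiff ℝ 2 u₁) (hu₂ : ContDiff ℝ 2 u₂)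
    (heq₁ : ∀ x ∈ Set.Icc a b, deriv (deriv u₁) x = (P x - E₁) * u₁ x)
    (heq₂ : ∀ x ∈ Set.Icc a b, deriv (deriv u₂) x = (P x - E₂) * u₂ x)
    (hnz₂ : ∀ x ∈ Set.Ioo a b, u₂ x ≠ 0) :
    ¬ ∀ x ∈ Set.Icc a b, |u₁ x| = |u₂ x| := by
  intro h
  obtain ⟨x₀, hx₀⟩ := nonempty_Ioo.mpr hab
  have hIcc : Icc a b ∈ 𝓝 x₀ := Icc_mem_nhds hx₀.1 hx₀.2
  obtain ⟨c, hc, hu⟩ := exists_abs_eq_one_eventuallyEq_mul_of_abs_eq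
    hu₁.continuous.continuousAt hu₂.continuous.continuousAt (hnz₂ x₀ hx₀)
    (eventually_of_mem hIcc h)
  have hV := eq_of_deriv_deriv_eq_mul_of_eventuallyEq_const_mul (by rintro rfl; simp at hc)
    (hnz₂ x₀ hx₀) hu (heq₁ x₀ (mem_of_mem_nhds hIcc)) (heq₂ x₀ (mem_of_mem_nhds hIcc))
  exact hE (by linarith)

theorem stmt8 (P : ℝ → ℝ) (hP : Continuous P) (a b : ℝ) (hab : a < b)
    (E₁ E₂ : ℝ) (hE : E₁ ≠ E₂) (u₁ u₂ : ℝ → ℝ)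
    (hu₁ : ContDiff ℝ 2 u₁) (hu₂ : ContDiff ℝ 2 u₂)
    (heq₁ : ∀ x ∈ Set.Icc a b, deriv (deriv u₁) x = (P x - E₁) * u₁ x)
    (heq₂ : ∀ x ∈ Set.Icc a b, deriv (deriv u₂) x = (P x - E₂) * u₂ x)
    (hbc₁a : u₁ a = 0) (hbc₁b : u₁ b = 0) (hbc₂a : u₂ a = 0) (hbc₂b : u₂ b = 0)
    (hnz₁ : ∀ x ∈ Set.Ioo a b, u₁ x ≠ 0) (hnz₂ : ∀ x ∈ Set.Ioo a b, u₂ x ≠ 0) :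
    ¬ ∀ x ∈ Set.Icc a b, |u₁ x| = |u₂ x| :=
  stmt8_general P a b hab E₁ E₂ hE u₁ u₂ hu₁ hu₂ heq₁ heq₂ hnz₂
end
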